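/- For integers d ≥ 0, h ≥ 1 and reals u, v > 0, the set J(d,h,u,v) = {x ∈ (0,1)∖ℚ : T^d l(x) ≥ u and T^{d+h} l(x) ≥ v} satisfies m(J(d,h,u,v)) ≤ 2 exp(−2^{(h−2)/2} v exp(2^{(d−2)/2} u)), where m is the Gauss measure. -/

import Mathlib

/-!
Writing `α` for the Gauss map, `T^n f (x) = x α(x) ⋯ α^{n-1}(x) · f(α^n x)`, and any two
consecutive factors of this product satisfy `y α(y) ≤ 1/2`. Hence on `J` the first condition
forces `α^d x ≤ exp(-2^{(d-2)/2} u)`, which together with the second condition forces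
`α^{d+h} x ≤ exp(-2^{(h-2)/2} v exp(2^{(d-2)/2} u)) =: c`. Since `α` preserves the Gauss
measure, `m(J) ≤ m(α^{-(d+h)}[0, c]) = m[0, c] = log₂(1 + c) ≤ 2c`.
-/

open MeasureTheory Set

/-- The Gauss measure. -/
noncomputable def gaussMeasure : Measure ℝ :=
  (volume.withDensity (fun x => ENNReal.ofReal (1 / (Real.log 2 * (1 + x))))).restrict (Ioo 0 1)

/-- The operator `Tf(x) = x f(α(x))`. -/
noncomputable def Tgauss (f : ℝ → ℝ) : ℝ → ℝ := fun x => x * f (Int.fract x⁻¹)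

open Real Filter Topology

noncomputable def gaussMap (x : ℝ) : ℝ := Int.fract x⁻¹

theorem measurable_gaussMap : Measurable gaussMap :=
  measurable_fract.comp measurable_inv

theorem gaussMap_mem_Icc (x : ℝ) : gaussMap x ∈ Icc 0 1 :=
  ⟨Int.fract_nonneg _, (Int.fract_lt_one _).le⟩

theorem gaussMap_iterate_mem_Icc {x : ℝ} (hx : x ∈ Icc 0 1) (n : ℕ) :
    gaussMap^[n] x ∈ Icc 0 1 :=
  Function.Iterate.rec (· ∈ Icc 0 1) hx (fun y _ => gaussMap_mem_Icc y) n

theorem Irrational.gaussMap_iterate {x : ℝ} (hx : Irrational x) (n : ℕ) :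
    Irrational (gaussMap^[n] x) :=
  Function.Iterate.rec Irrational hx (fun _ hy => hy.inv.sub_intCast _) n

/-- On `(0, 1]` we have `x α(x) = 1 - x ⌊1/x⌋ ≤ 1 - x` and `x α(x) ≤ x`. -/
theorem mul_gaussMap_le_half {x : ℝ} (hx : x ∈ Icc 0 1) : x * gaussMap x ≤ 1 / 2 := by
  rcases hx.1.eq_or_lt with rfl | hx0
  · norm_num
  have hfloor : (1 : ℝ) ≤ ⌊x⁻¹⌋ := by
    exact_mod_cast Int.le_floor.mpr (by exact_mod_cast one_le_inv₀ hx0 |>.mpr hx.2)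
  have hle_x : x * gaussMap x ≤ x := mul_le_of_le_one_right hx0.le (gaussMap_mem_Icc x).2
  have hle_one_sub : x * gaussMap x ≤ 1 - x := by
    have : x * gaussMap x = 1 - x * ⌊x⁻¹⌋ := by
      rw [gaussMap, ← Int.self_sub_floor, mul_sub, mul_inv_cancel₀ hx0.ne']
    rw [this]
    nlinarith
  linarith

noncomputable def gaussOrbitProd (n : ℕ) (x : ℝ) : ℝ := ∏ k ∈ Finset.range n, gaussMap^[k] x

theorem gaussOrbitProd_succ (n : ℕ) (x : ℝ) :
    gaussOrbitProd (n + 1) x = gaussOrbitProd n x * gaussMap^[n] x :=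
  Finset.prod_range_succ _ _

theorem gaussOrbitProd_add (m n : ℕ) (x : ℝ) :
    gaussOrbitProd (m + n) x = gaussOrbitProd m x * gaussOrbitProd n (gaussMap^[m] x) := by
  simp only [gaussOrbitProd, Finset.prod_range_add]
  congr 1
  exact Finset.prod_congr rfl fun k _ => by rw [add_comm, Function.iterate_add_apply]

theorem Tgauss_iterate_apply (n : ℕ) (f : ℝ → ℝ) (x : ℝ) :
    Tgauss^[n] f x = gaussOrbitProd n x * f (gaussMap^[n] x) := by
  induction n generalizing f with
  | zero => simp [gaussOrbitProd]
  | succ n ih =>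
    rw [Function.iterate_succ_apply, ih, gaussOrbitProd_succ, Function.iterate_succ_apply']
    simp only [Tgauss, gaussMap]
    ring

theorem gaussOrbitProd_nonneg (n : ℕ) {x : ℝ} (hx : x ∈ Icc 0 1) : 0 ≤ gaussOrbitProd n x :=
  Finset.prod_nonneg fun k _ => (gaussMap_iterate_mem_Icc hx k).1

theorem gaussOrbitProd_le_one (n : ℕ) {x : ℝ} (hx : x ∈ Icc 0 1) : gaussOrbitProd n x ≤ 1 :=
  Finset.prod_le_one (fun k _ => (gaussMap_iterate_mem_Icc hx k).1)
    fun k _ => (gaussMap_iterate_mem_Icc hx k).2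

theorem gaussOrbitProd_le_half_pow :
    ∀ (n : ℕ) {x : ℝ}, x ∈ Icc 0 1 → gaussOrbitProd n x ≤ (1 / 2) ^ (n / 2)
  | 0, _, _ => by simp [gaussOrbitProd]
  | 1, _, hx => by simpa [gaussOrbitProd] using hx.2
  | n + 2, x, hx => by
    have hsplit :
        gaussOrbitProd (n + 2) x = x * gaussMap x * gaussOrbitProd n (gaussMap^[2] x) := by
      rw [add_comm, gaussOrbitProd_add]
      simp [gaussOrbitProd, Finset.prod_range_succ]
    rw [hsplit, show (n + 2) / 2 = n / 2 + 1 by omega, pow_succ']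
    exact mul_le_mul (mul_gaussMap_le_half hx)
      (gaussOrbitProd_le_half_pow n (gaussMap_iterate_mem_Icc hx 2))
      (gaussOrbitProd_nonneg n (gaussMap_iterate_mem_Icc hx 2)) (by norm_num)

theorem gaussOrbitProd_le_two_rpow (n : ℕ) {x : ℝ} (hx : x ∈ Icc 0 1) :
    gaussOrbitProd n x ≤ 2 ^ (-(((n : ℝ) - 1) / 2)) := by
  refine (gaussOrbitProd_le_half_pow n hx).trans ?_
  have hn : ((n : ℝ) - 1) / 2 ≤ ((n / 2 : ℕ) : ℝ) := by
    have : (n : ℝ) ≤ 2 * ((n / 2 : ℕ) : ℝ) + 1 := by exact_mod_cast (by omega : n ≤ 2 * (n / 2) + 1)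
    linarith
  rw [one_div, inv_pow, ← rpow_natCast, ← rpow_neg zero_le_two]
  exact rpow_le_rpow_of_exponent_le one_le_two (neg_le_neg hn)

theorem le_exp_neg_div_of_le_mul_log {z p q a : ℝ} (hz0 : 0 < z) (hz1 : z ≤ 1) (hq : 0 < q)
    (hpq : p ≤ q) (h : a ≤ p * log (1 / z)) : z ≤ exp (-(a / q)) := by
  have hlog : 0 ≤ log (1 / z) := log_nonneg (one_le_one_div hz0 hz1)
  have : a / q ≤ log (1 / z) := (div_le_iff₀' hq).mpr (h.trans (by gcongr))
  rw [one_div, log_inv] at this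
  rw [← log_le_iff_le_exp hz0]
  linarith

theorem gaussMap_iterate_pos {x : ℝ} (hx : x ∈ Icc 0 1) (hirr : Irrational x) (n : ℕ) :
    0 < gaussMap^[n] x :=
  (gaussMap_iterate_mem_Icc hx n).1.lt_of_ne' (hirr.gaussMap_iterate n).ne_zero

theorem gaussMap_iterate_le_of_le_Tgauss_iterate {d h : ℕ} (hh : 1 ≤ h) {u v x : ℝ}
    (hx : x ∈ Icc 0 1) (hirr : Irrational x)
    (hu : u ≤ Tgauss^[d] (fun y => log (1 / y)) x)
    (hv : v ≤ Tgauss^[d + h] (fun y => log (1 / y)) x) :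
    gaussMap^[d + h] x ≤
      exp (-(2 : ℝ) ^ (((h : ℝ) - 2) / 2) * v * exp ((2 : ℝ) ^ (((d : ℝ) - 2) / 2) * u)) := by
  rw [Tgauss_iterate_apply] at hu hv
  set E := exp (-(u / 2 ^ (-(((d : ℝ) - 2) / 2))))
  have hPd : gaussOrbitProd d x ≤ 2 ^ (-(((d : ℝ) - 2) / 2)) :=
    (gaussOrbitProd_le_two_rpow d hx).trans
      (rpow_le_rpow_of_exponent_le one_le_two (by linarith))
  have hyE : gaussMap^[d] x ≤ E :=
    le_exp_neg_div_of_le_mul_log (gaussMap_iterate_pos hx hirr d)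
      (gaussMap_iterate_mem_Icc hx d).2 (by positivity) hPd hu
  have hPdh : gaussOrbitProd (d + h) x ≤ E * 2 ^ (-(((h : ℝ) - 2) / 2)) := by
    obtain ⟨k, rfl⟩ : ∃ k, h = k + 1 := ⟨h - 1, by omega⟩
    have hw := gaussMap_iterate_mem_Icc hx (d + 1)
    have hk : gaussOrbitProd k (gaussMap^[d + 1] x) ≤ 2 ^ (-((((k + 1 : ℕ) : ℝ) - 2) / 2)) := by
      convert gaussOrbitProd_le_two_rpow k hw using 3
      push_cast
      ring
    rw [show d + (k + 1) = d + 1 + k by ring, gaussOrbitProd_add, gaussOrbitProd_succ]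
    calc gaussOrbitProd d x * gaussMap^[d] x * gaussOrbitProd k (gaussMap^[d + 1] x)
        ≤ (1 * E) * 2 ^ (-((((k + 1 : ℕ) : ℝ) - 2) / 2)) := by
          gcongr
          · exact gaussOrbitProd_nonneg k hw
          · exact (gaussMap_iterate_mem_Icc hx d).1
          · exact gaussOrbitProd_le_one d hx
      _ = E * 2 ^ (-((((k + 1 : ℕ) : ℝ) - 2) / 2)) := by rw [one_mul]
  convert le_exp_neg_div_of_le_mul_log (gaussMap_iterate_pos hx hirr (d + h))
    (gaussMap_iterate_mem_Icc hx (d + h)).2 (by positivity) hPdh hv using 2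
  simp only [E, rpow_neg zero_le_two, exp_neg]
  field_simp

theorem gaussMeasure_apply (s : Set ℝ) :
    gaussMeasure s = ∫⁻ x in s ∩ Ioo 0 1, ENNReal.ofReal (1 / (log 2 * (1 + x))) := by
  rw [gaussMeasure, Measure.restrict_apply' measurableSet_Ioo, withDensity_apply']

theorem gaussMeasure_congr {s t : Set ℝ} (h : s ∩ Ioo 0 1 = t ∩ Ioo 0 1) :
    gaussMeasure s = gaussMeasure t := by
  rw [gaussMeasure_apply, gaussMeasure_apply, h]

theorem hasDerivAt_logb_two_one_add {x : ℝ} (hx : 1 + x ≠ 0) :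
    HasDerivAt (fun t => logb 2 (1 + t)) (1 / (log 2 * (1 + x))) x :=
  ((((hasDerivAt_id x).const_add 1).log hx).div_const (log 2)).congr_deriv
    (by simp [div_eq_mul_inv])

theorem setLIntegral_Icc_gauss_density {a b : ℝ} (ha : -1 < a) (hab : a ≤ b) :
    ∫⁻ x in Icc a b, ENNReal.ofReal (1 / (log 2 * (1 + x))) =
      ENNReal.ofReal (logb 2 (1 + b) - logb 2 (1 + a)) := by
  have hcont : ContinuousOn (fun x => 1 / (log 2 * (1 + x))) (Icc a b) :=
    continuousOn_const.div (by fun_prop) fun x hx =>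
      mul_ne_zero (log_pos one_lt_two).ne' (by linarith [hx.1])
  rw [← ofReal_integral_eq_lintegral_ofReal (hcont.integrableOn_Icc)
    ((ae_restrict_iff' measurableSet_Icc).2 (ae_of_all _ fun x hx =>
      one_div_nonneg.2 (mul_nonneg (log_pos one_lt_two).le (by linarith [hx.1])))),
    integral_Icc_eq_integral_Ioc, ← intervalIntegral.integral_of_le hab,
    intervalIntegral.integral_eq_sub_of_hasDerivAt
      (fun x hx => hasDerivAt_logb_two_one_add (by linarith [(uIcc_of_le hab ▸ hx).1]))
      (hcont.intervalIntegrable_of_Icc hab)]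

theorem gaussMeasure_eq_of_Ioo_subset {s : Set ℝ} {a b : ℝ} (ha : 0 ≤ a) (hab : a ≤ b)
    (hb : b ≤ 1) (h₁ : Ioo a b ⊆ s) (h₂ : s ∩ Ioo 0 1 ⊆ Icc a b) :
    gaussMeasure s = ENNReal.ofReal (logb 2 (1 + b) - logb 2 (1 + a)) := by
  rw [gaussMeasure_apply, ← setLIntegral_Icc_gauss_density (by linarith) hab]
  refine le_antisymm (lintegral_mono_set h₂) ?_
  rw [← setLIntegral_congr Ioo_ae_eq_Icc]
  exact lintegral_mono_set fun x hx =>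
    ⟨h₁ hx, ha.trans_lt hx.1, hx.2.trans_le hb⟩

instance : IsProbabilityMeasure gaussMeasure := by
  constructor
  rw [gaussMeasure_eq_of_Ioo_subset le_rfl zero_le_one le_rfl (subset_univ _) fun x hx =>
    ⟨hx.2.1.le, hx.2.2.le⟩]
  norm_num

theorem gaussMeasure_Iic {c : ℝ} (hc0 : 0 ≤ c) (hc1 : c ≤ 1) :
    gaussMeasure (Iic c) = ENNReal.ofReal (logb 2 (1 + c)) := by
  rw [gaussMeasure_eq_of_Ioo_subset (s := Iic c) le_rfl hc0 hc1 (fun x hx => hx.2.le) fun x hx =>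
    ⟨hx.2.1.le, hx.1⟩]
  simp

theorem gaussMeasure_Iic_le {c : ℝ} (hc : 0 ≤ c) :
    gaussMeasure (Iic c) ≤ ENNReal.ofReal (2 * c) := by
  rcases le_or_gt c 1 with hc1 | hc1
  · rw [gaussMeasure_Iic hc hc1]
    refine ENNReal.ofReal_le_ofReal ?_
    have hlog : log (1 + c) ≤ c := by linarith [log_le_sub_one_of_pos (by linarith : 0 < 1 + c)]
    rw [logb, div_le_iff₀ (log_pos one_lt_two)]
    nlinarith [log_two_gt_d9]
  · exact prob_le_one.trans (ENNReal.ofReal_one ▸ ENNReal.ofReal_le_ofReal (by linarith))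

theorem Monotone.hasSum_sub_of_tendsto {g : ℕ → ℝ} {l : ℝ} (hg : Monotone g)
    (hl : Tendsto g atTop (𝓝 l)) : HasSum (fun n => g (n + 1) - g n) (l - g 0) :=
  (hasSum_iff_tendsto_nat_of_nonneg (fun n => sub_nonneg.2 (hg n.le_succ)) _).2 <| by
    simpa only [Finset.sum_range_sub] using hl.sub_const (g 0)

theorem logb_two_one_add_inv_anti {x y : ℝ} (hx : 0 < x) (hxy : x ≤ y) :
    logb 2 (1 + y⁻¹) ≤ logb 2 (1 + x⁻¹) :=
  have hy : 0 < y := hx.trans_le hxy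
  logb_le_logb_of_le one_lt_two (by positivity) (add_le_add_right (inv_anti₀ hx hxy) 1)

theorem hasSum_logb_two_one_add_inv_sub {a : ℝ} (ha : 0 ≤ a) :
    HasSum (fun n : ℕ => logb 2 (1 + ((n : ℝ) + 1)⁻¹) - logb 2 (1 + ((n : ℝ) + 1 + a)⁻¹))
      (logb 2 (1 + a)) := by
  set g : ℕ → ℝ := fun n => logb 2 (((n : ℝ) + 1) / ((n : ℝ) + 1 + a))
  have hg_succ (n : ℕ) : g (n + 1) - g n =
      logb 2 (1 + ((n : ℝ) + 1)⁻¹) - logb 2 (1 + ((n : ℝ) + 1 + a)⁻¹) := by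
    simp only [g]
    rw [← logb_div (by positivity) (by positivity), ← logb_div (by positivity) (by positivity)]
    congr 1
    push_cast
    field_simp
    ring
  have hg_mono : Monotone g := monotone_nat_of_le_succ fun n => by
    rw [← sub_nonneg, hg_succ, sub_nonneg]
    exact logb_two_one_add_inv_anti (by positivity) (le_add_of_nonneg_right ha)
  have hg_lim : Tendsto g atTop (𝓝 0) := by
    have hfrac : Tendsto (fun n : ℕ => ((n : ℝ) + 1) / ((n : ℝ) + 1 + a)) atTop (𝓝 1) := by
      simpa [Function.comp_def] using
        (tendsto_natCast_div_add_atTop a).comp (tendsto_add_atTop_nat 1)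
    rw [← logb_one (b := 2)]
    exact (continuousAt_logb one_ne_zero).tendsto.comp hfrac
  simpa only [hg_succ, g, CharP.cast_eq_zero, zero_add, one_div, logb_inv, zero_sub, neg_neg]
    using hg_mono.hasSum_sub_of_tendsto hg_lim

/-- On this set `1 / x = n + 1 + α(x) ∈ [n + 1, n + 1 + a]`. -/
theorem gaussMeasure_gaussMap_preimage_Iic_inter_floor_eq {a : ℝ} (ha0 : 0 ≤ a) (ha1 : a ≤ 1)
    (n : ℕ) :
    gaussMeasure (gaussMap ⁻¹' Iic a ∩ {x | ⌊x⁻¹⌋ = n + 1}) =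
      ENNReal.ofReal (logb 2 (1 + ((n : ℝ) + 1)⁻¹) - logb 2 (1 + ((n : ℝ) + 1 + a)⁻¹)) := by
  refine gaussMeasure_eq_of_Ioo_subset (by positivity) (inv_anti₀ (by positivity) (by linarith))
    (inv_le_one_of_one_le₀ (by linarith)) ?_ ?_
  · intro x hx
    have hx0 : 0 < x := lt_trans (by positivity) hx.1
    have h₁ : (n : ℝ) + 1 < x⁻¹ := (lt_inv_comm₀ hx0 (by positivity)).1 hx.2
    have h₂ : x⁻¹ < (n : ℝ) + 1 + a := (inv_lt_comm₀ (by positivity) hx0).1 hx.1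
    have hfloor : ⌊x⁻¹⌋ = n + 1 :=
      Int.floor_eq_iff.2 ⟨by push_cast; linarith, by push_cast; linarith⟩
    refine ⟨?_, hfloor⟩
    change x⁻¹ - ⌊x⁻¹⌋ ≤ a
    rw [hfloor]
    push_cast
    linarith
  · rintro x ⟨⟨hxa, hfloor⟩, hx0, -⟩
    change gaussMap x ≤ a at hxa
    change ⌊x⁻¹⌋ = n + 1 at hfloor
    have hfract : x⁻¹ = (n : ℝ) + 1 + gaussMap x := by
      rw [← Int.floor_add_fract x⁻¹, hfloor]
      push_cast
      rfl
    exact ⟨(inv_le_comm₀ (by positivity) hx0).2 (by linarith),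
      (le_inv_comm₀ hx0 (by positivity)).2 (by linarith [(gaussMap_mem_Icc x).1])⟩

/-- The pieces of the preimage on which `⌊1/x⌋` is constant have telescoping measures. -/
theorem gaussMeasure_gaussMap_preimage_Iic {a : ℝ} (ha0 : 0 ≤ a) (ha1 : a ≤ 1) :
    gaussMeasure (gaussMap ⁻¹' Iic a) = ENNReal.ofReal (logb 2 (1 + a)) := by
  set piece : ℕ → Set ℝ := fun n => gaussMap ⁻¹' Iic a ∩ {x | ⌊x⁻¹⌋ = n + 1}
  have hpiece_meas (n : ℕ) : MeasurableSet (piece n) :=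
    (measurable_gaussMap measurableSet_Iic).inter
      (measurableSet_eq_fun (Int.measurable_floor.comp measurable_inv) measurable_const)
  have hpiece_disj : Pairwise (Function.onFun Disjoint piece) := fun m n hmn =>
    Set.disjoint_left.2 fun x hm hn => hmn (by have := hm.2.symm.trans hn.2; omega)
  have hunion : gaussMeasure (gaussMap ⁻¹' Iic a) = gaussMeasure (⋃ n, piece n) := by
    refine gaussMeasure_congr (Set.ext fun x =>
      ⟨fun ⟨hxa, hx⟩ => ⟨?_, hx⟩, fun ⟨hx, hx'⟩ => ⟨(mem_iUnion.1 hx).choose_spec.1, hx'⟩⟩)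
    have : 1 ≤ ⌊x⁻¹⌋ := Int.le_floor.2 (by exact_mod_cast (one_le_inv₀ hx.1).2 hx.2.le)
    obtain ⟨n, hn⟩ := Int.eq_ofNat_of_zero_le (by omega : 0 ≤ ⌊x⁻¹⌋ - 1)
    exact mem_iUnion.2 ⟨n, hxa, by simp only [mem_ofPred_eq]; omega⟩
  have hsum := hasSum_logb_two_one_add_inv_sub ha0
  rw [hunion, measure_iUnion hpiece_disj hpiece_meas]
  simp only [piece, gaussMeasure_gaussMap_preimage_Iic_inter_floor_eq ha0 ha1]
  rw [← ENNReal.ofReal_tsum_of_nonneg (fun n => sub_nonneg.2 <|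
    logb_two_one_add_inv_anti (by positivity) (le_add_of_nonneg_right ha0)) hsum.summable,
    hsum.tsum_eq]

theorem measurePreserving_gaussMap : MeasurePreserving gaussMap gaussMeasure gaussMeasure := by
  refine ⟨measurable_gaussMap, Measure.ext_of_Iic _ _ fun a => ?_⟩
  rw [Measure.map_apply measurable_gaussMap measurableSet_Iic]
  rcases lt_or_ge a 0 with ha0 | ha0
  · refine gaussMeasure_congr (Set.ext fun x => ?_)
    simp only [mem_inter_iff, mem_preimage, mem_Iic, mem_Ioo]
    have := (gaussMap_mem_Icc x).1
    constructor <;> rintro ⟨hxa, hx0, -⟩ <;> linarith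
  rcases le_or_gt a 1 with ha1 | ha1
  · rw [gaussMeasure_gaussMap_preimage_Iic ha0 ha1, gaussMeasure_Iic ha0 ha1]
  · refine gaussMeasure_congr (Set.ext fun x => ?_)
    simp only [mem_inter_iff, mem_preimage, mem_Iic, mem_Ioo]
    have := (gaussMap_mem_Icc x).2
    constructor <;> rintro ⟨-, hx0, hx1⟩ <;> exact ⟨by linarith, hx0, hx1⟩

theorem measure_J_bound_general (d h : ℕ) (hh : 1 ≤ h) (u v : ℝ) :
    gaussMeasure {x : ℝ | x ∈ Ioo (0:ℝ) 1 ∧ Irrational x ∧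
        u ≤ Tgauss^[d] (fun y => Real.log (1 / y)) x ∧
        v ≤ Tgauss^[d + h] (fun y => Real.log (1 / y)) x} ≤
      ENNReal.ofReal (2 * Real.exp (-(2 : ℝ) ^ (((h : ℝ) - 2) / 2) * v *
        Real.exp ((2 : ℝ) ^ (((d : ℝ) - 2) / 2) * u))) := by
  set c := Real.exp (-(2 : ℝ) ^ (((h : ℝ) - 2) / 2) * v *
    Real.exp ((2 : ℝ) ^ (((d : ℝ) - 2) / 2) * u))
  calc gaussMeasure _ ≤ gaussMeasure (gaussMap^[d + h] ⁻¹' Iic c) :=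
        measure_mono fun x hx =>
          gaussMap_iterate_le_of_le_Tgauss_iterate hh (Ioo_subset_Icc_self hx.1) hx.2.1 hx.2.2.1
            hx.2.2.2
    _ = gaussMeasure (Iic c) :=
        (measurePreserving_gaussMap.iterate _).measure_preimage measurableSet_Iic.nullMeasurableSet
    _ ≤ ENNReal.ofReal (2 * c) := gaussMeasure_Iic_le (exp_pos _).le

theorem measure_J_bound (d h : ℕ) (hh : 1 ≤ h) (u v : ℝ) (hu : 0 < u) (hv : 0 < v) :
    gaussMeasure {x : ℝ | x ∈ Ioo (0:ℝ) 1 ∧ Irrational x ∧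
        u ≤ Tgauss^[d] (fun y => Real.log (1 / y)) x ∧
        v ≤ Tgauss^[d + h] (fun y => Real.log (1 / y)) x} ≤
      ENNReal.ofReal (2 * Real.exp (-(2 : ℝ) ^ (((h : ℝ) - 2) / 2) * v *
        Real.exp ((2 : ℝ) ^ (((d : ℝ) - 2) / 2) * u))) :=
  measure_J_bound_general d h hh u v
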